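/- arXiv:2306.13258 — 7 statements merged into one kernel-verified Lean document; each statement's English description precedes it below -/
import Mathlib

section
/- Let G be a simple graph, k a positive integer, and P a k-plex of G with |P| ≥ 2k - 1. Then for any two distinct vertices u, w ∈ P that are not adjacent in G, there exists a vertex x ∈ P that is adjacent to both u and w. In particular, any two distinct vertices of P are at distance at most 2 in the induced subgraph G[P]. -/
/-!
Two non-adjacent vertices `u ≠ w` of a `k`-plex `P` each have at least `|P| - k` neighbours in
`P`, all of them in `P \ {u, w}`, a set of size `|P| - 2`. Since `2 (|P| - k) > |P| - 2` exactly
when `|P| ≥ 2k - 1`, the two neighbourhoods must overlap.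
-/

open scoped Classical

/-- A `k`-plex of a simple graph `G` is a finite vertex set `P` such that every
vertex `v ∈ P` has at least `|P| - k` neighbors inside `P`. -/
def IsKPlex {V : Type*} (G : SimpleGraph V) (k : ℕ) (P : Finset V) : Prop :=
  ∀ v ∈ P, P.card - k ≤ (P.filter (fun u => G.Adj v u)).card

open Finset

namespace SimpleGraph

variable {V : Type*} (G : SimpleGraph V)

lemma dist_le_two_of_adj_or_exists_adj_adj {u v : V}
    (h : G.Adj u v ∨ ∃ x, G.Adj u x ∧ G.Adj x v) : G.dist u v ≤ 2 := by
  rcases h with huv | ⟨x, hux, hxv⟩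
  · exact (dist_eq_one_iff_adj.mpr huv).trans_le one_le_two
  · exact dist_le (.cons hux (.cons hxv .nil))

lemma filter_adj_subset_sdiff_pair (P : Finset V) {u w : V} (huw : ¬G.Adj u w) :
    P.filter (G.Adj u ·) ⊆ P \ {u, w} := by
  intro x hx
  obtain ⟨hxP, hux⟩ := mem_filter.mp hx
  simp only [mem_sdiff, mem_insert, mem_singleton, not_or]
  exact ⟨hxP, fun h => G.loopless.irrefl u (h ▸ hux), fun h => huw (h ▸ hux)⟩

lemma exists_common_adj_of_card_lt {P : Finset V} {u w : V} (hu : u ∈ P) (hw : w ∈ P)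
    (huw : u ≠ w) (hadj : ¬G.Adj u w)
    (hcard : #P < #(P.filter (G.Adj u ·)) + #(P.filter (G.Adj w ·)) + 2) :
    ∃ x ∈ P, G.Adj u x ∧ G.Adj w x := by
  have hpair : {u, w} ⊆ P := insert_subset hu (singleton_subset_iff.mpr hw)
  have htwo : 2 ≤ #P := card_pair huw ▸ card_le_card hpair
  have hrest : #(P \ {u, w}) = #P - 2 := by
    rw [card_sdiff_of_subset hpair, card_pair huw]
  have hwu : ¬G.Adj w u := fun h => hadj h.symm
  obtain ⟨x, hx⟩ := inter_nonempty_of_card_lt_card_add_card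
    (G.filter_adj_subset_sdiff_pair P hadj)
    (pair_comm w u ▸ G.filter_adj_subset_sdiff_pair P hwu)
    (by omega)
  obtain ⟨hxu, hxw⟩ := mem_inter.mp hx
  exact ⟨x, (mem_filter.mp hxu).1, (mem_filter.mp hxu).2, (mem_filter.mp hxw).2⟩

end SimpleGraph

lemma IsKPlex.exists_common_adj {V : Type*} {G : SimpleGraph V} {k : ℕ} {P : Finset V}
    (hP : IsKPlex G k P) (hcard : 2 * k - 1 ≤ #P) {u w : V} (hu : u ∈ P) (hw : w ∈ P)
    (huw : u ≠ w) (hadj : ¬G.Adj u w) : ∃ x ∈ P, G.Adj u x ∧ G.Adj w x :=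
  G.exists_common_adj_of_card_lt hu hw huw hadj (by have := hP u hu; have := hP w hw; omega)

theorem kplex_common_neighbor_and_dist_le_two_general {V : Type*} (G : SimpleGraph V)
    (k : ℕ) (P : Finset V) (hP : IsKPlex G k P)
    (hcard : 2 * k - 1 ≤ P.card) :
    (∀ u ∈ P, ∀ w ∈ P, u ≠ w → ¬ G.Adj u w → ∃ x ∈ P, G.Adj u x ∧ G.Adj w x) ∧
    (∀ u w : (↑P : Set V), u ≠ w → (G.induce (↑P : Set V)).dist u w ≤ 2) := by
  refine ⟨fun u hu w hw => hP.exists_common_adj hcard hu hw, fun u w huw => ?_⟩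
  apply SimpleGraph.dist_le_two_of_adj_or_exists_adj_adj
  by_cases hadj : G.Adj u w
  · exact .inl hadj
  · obtain ⟨x, hxP, hux, hwx⟩ :=
      hP.exists_common_adj hcard u.2 w.2 (Subtype.coe_ne_coe.mpr huw) hadj
    exact .inr ⟨⟨x, hxP⟩, hux, hwx.symm⟩

/-- In a `k`-plex `P` with `|P| ≥ 2k - 1`, any two distinct non-adjacent vertices of `P`
have a common neighbor inside `P`; in particular any two distinct vertices of `P` are at
distance at most `2` in the induced subgraph `G[P]`. -/
theorem kplex_common_neighbor_and_dist_le_two {V : Type*} (G : SimpleGraph V)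
    (k : ℕ) (hk : 0 < k) (P : Finset V) (hP : IsKPlex G k P)
    (hcard : 2 * k - 1 ≤ P.card) :
    (∀ u ∈ P, ∀ w ∈ P, u ≠ w → ¬ G.Adj u w → ∃ x ∈ P, G.Adj u x ∧ G.Adj w x) ∧
    (∀ u w : (↑P : Set V), u ≠ w → (G.induce (↑P : Set V)).dist u w ≤ 2) :=
  kplex_common_neighbor_and_dist_le_two_general G k P hP hcard
end

section
/- Let G be a simple graph on a linearly ordered vertex set, k a positive integer, and P a k-plex of G with |P| ≥ 2k - 1. Let v be the least vertex of P with respect to the linear order. Then P ⊆ {v} ∪ N_G^+(v) ∪ N_G^{2+}(v), where N_G^+(v) is the set of neighbors of v that are greater than v and N_G^{2+}(v) is the set of 2-hop neighbors of v that are greater than v; moreover |N_G^2(v) ∩ P| ≤ k - 1, where N_G^2(v) denotes the 2-hop neighbors of v. -/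
open scoped Classical

/-- The 2-hop neighbors of `v` in `G`:
`N_G²(v) = (⋃_{u ∈ N_G(v)} N_G(u)) \ (N_G(v) ∪ {v})`. -/
def twoHop {V : Type*} (G : SimpleGraph V) (v : V) : Set V :=
  (⋃ u ∈ G.neighborSet v, G.neighborSet u) \ (G.neighborSet v ∪ {v})

/- In a `k`-plex `P` every vertex misses at most `k - 1` other vertices of `P`. Hence two
non-adjacent vertices `v, w ∈ P` each see at least `|P| - k` of the `|P| - 2` remaining vertices,
and `2(|P| - k) > |P| - 2` once `|P| ≥ 2k - 1`: they share a neighbour. So every vertex of `P`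
other than its least vertex `v` is a neighbour or a 2-hop neighbour of `v`, and the 2-hop
neighbours of `v` in `P` are among its at most `k - 1` non-neighbours. -/

theorem mem_twoHop_iff {V : Type*} {G : SimpleGraph V} {v w : V} :
    w ∈ twoHop G v ↔ (∃ u, G.Adj v u ∧ G.Adj u w) ∧ w ≠ v ∧ ¬G.Adj v w := by
  simp [twoHop]

namespace IsKPlex

open Finset

variable {V : Type*} {G : SimpleGraph V} {k : ℕ} {P : Finset V}

theorem card_filter_not_adj_le (hP : IsKPlex G k P) {v : V} (hv : v ∈ P) :
    ((P.erase v).filter (fun u => ¬G.Adj v u)).card ≤ k - 1 := by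
  have hadj : (P.erase v).filter (fun u => G.Adj v u) = P.filter (fun u => G.Adj v u) := by
    ext u
    simp only [mem_filter, mem_erase]
    exact ⟨fun h => ⟨h.1.2, h.2⟩, fun h => ⟨⟨(G.ne_of_adj h.2).symm, h.1⟩, h.2⟩⟩
  have hsplit := card_filter_add_card_filter_not (s := P.erase v) (fun u => G.Adj v u)
  rw [hadj, card_erase_of_mem hv] at hsplit
  have := hP v hv
  omega

theorem exists_common_adj_of_not_adj (hP : IsKPlex G k P) (hcard : 2 * k - 1 ≤ P.card)
    {v w : V} (hv : v ∈ P) (hw : w ∈ P) (hvw : ¬G.Adj v w) (hne : v ≠ w) :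
    ∃ u ∈ P, G.Adj v u ∧ G.Adj w u := by
  set A := P.filter (fun u => G.Adj v u)
  set B := P.filter (fun u => G.Adj w u)
  have hsub : A ∪ B ⊆ (P.erase v).erase w := by
    intro u hu
    simp only [A, B, mem_union, mem_filter] at hu
    rcases hu with ⟨huP, hvu⟩ | ⟨huP, hwu⟩
    · refine mem_erase.2 ⟨?_, mem_erase.2 ⟨(G.ne_of_adj hvu).symm, huP⟩⟩
      rintro rfl
      exact hvw hvu
    · refine mem_erase.2 ⟨(G.ne_of_adj hwu).symm, mem_erase.2 ⟨?_, huP⟩⟩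
      rintro rfl
      exact hvw hwu.symm
  have hAB : ¬Disjoint A B := by
    intro hdisj
    have hle := card_le_card hsub
    rw [card_union_of_disjoint hdisj, card_erase_of_mem (mem_erase.2 ⟨hne.symm, hw⟩),
      card_erase_of_mem hv] at hle
    have hAcard : P.card - k ≤ A.card := hP v hv
    have hBcard : P.card - k ≤ B.card := hP w hw
    have : 1 < P.card := one_lt_card.2 ⟨v, hv, w, hw, hne⟩
    omega
  obtain ⟨u, huA, huB⟩ := not_disjoint_iff.1 hAB
  exact ⟨u, (mem_filter.1 huA).1, (mem_filter.1 huA).2, (mem_filter.1 huB).2⟩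

theorem mem_twoHop_of_not_adj (hP : IsKPlex G k P) (hcard : 2 * k - 1 ≤ P.card)
    {v w : V} (hv : v ∈ P) (hw : w ∈ P) (hvw : ¬G.Adj v w) (hne : v ≠ w) :
    w ∈ twoHop G v := by
  obtain ⟨u, -, hvu, hwu⟩ := hP.exists_common_adj_of_not_adj hcard hv hw hvw hne
  exact mem_twoHop_iff.2 ⟨⟨u, hvu, hwu.symm⟩, hne.symm, hvw⟩

theorem card_filter_twoHop_le (hP : IsKPlex G k P) {v : V} (hv : v ∈ P) :
    (P.filter (fun w => w ∈ twoHop G v)).card ≤ k - 1 := by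
  refine le_trans (card_le_card fun w hw => ?_) (hP.card_filter_not_adj_le hv)
  obtain ⟨hwP, -, hwv, hvw⟩ := by simpa only [mem_filter, mem_twoHop_iff] using hw
  exact mem_filter.2 ⟨mem_erase.2 ⟨hwv, hwP⟩, hvw⟩

end IsKPlex

theorem kplex_split_by_least_vertex_general {V : Type*} [LinearOrder V] (G : SimpleGraph V)
    (k : ℕ) (P : Finset V) (hP : IsKPlex G k P)
    (hcard : 2 * k - 1 ≤ P.card)
    (v : V) (hv : v ∈ P) (hmin : ∀ w ∈ P, v ≤ w) :
    (↑P : Set V) ⊆ {v} ∪ {w | G.Adj v w ∧ v < w} ∪ {w | w ∈ twoHop G v ∧ v < w} ∧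
    (P.filter (fun w => w ∈ twoHop G v)).card ≤ k - 1 := by
  refine ⟨fun w hw => ?_, hP.card_filter_twoHop_le hv⟩
  rcases (hmin w hw).eq_or_lt with rfl | hvw
  · exact Or.inl (Or.inl rfl)
  by_cases hadj : G.Adj v w
  · exact Or.inl (Or.inr ⟨hadj, hvw⟩)
  · exact Or.inr ⟨hP.mem_twoHop_of_not_adj hcard hv hw hadj hvw.ne, hvw⟩

/-- If `P` is a `k`-plex with `|P| ≥ 2k - 1` whose least vertex (w.r.t. the linear
order on the vertices) is `v`, then `P ⊆ {v} ∪ N_G⁺(v) ∪ N_G^{2+}(v)` and moreover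
`|N_G²(v) ∩ P| ≤ k - 1`. -/
theorem kplex_split_by_least_vertex {V : Type*} [LinearOrder V] (G : SimpleGraph V)
    (k : ℕ) (hk : 0 < k) (P : Finset V) (hP : IsKPlex G k P)
    (hcard : 2 * k - 1 ≤ P.card)
    (v : V) (hv : v ∈ P) (hmin : ∀ w ∈ P, v ≤ w) :
    (↑P : Set V) ⊆ {v} ∪ {w | G.Adj v w ∧ v < w} ∪ {w | w ∈ twoHop G v ∧ v < w} ∧
    (P.filter (fun w => w ∈ twoHop G v)).card ≤ k - 1 :=
  kplex_split_by_least_vertex_general G k P hP hcard v hv hmin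
end

section
/- Let G be a simple graph, k a positive integer, p an integer, and u, v two distinct adjacent vertices of G with |N_G(u) ∩ N_G(v)| < p - 2k. Then there is no k-plex of G of size at least p containing both u and v. -/
open scoped Classical

namespace Finset

theorem card_add_card_le_card_add_card_inter {α : Type*} [DecidableEq α]
    {s t u : Finset α} (hts : t ⊆ s) (hus : u ⊆ s) : #t + #u ≤ #s + #(t ∩ u) := by
  rw [← card_union_add_card_inter]
  gcongr
  exact union_subset hts hus

end Finset

namespace IsKPlex

variable {V : Type*} {G : SimpleGraph V} {k : ℕ} {P : Finset V} {u v : V}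

theorem card_sub_le_card_filter_adj (hP : IsKPlex G k P) (hv : v ∈ P) :
    (P.card : ℤ) - k ≤ (P.filter (G.Adj v)).card := by
  have h : P.card ≤ (P.filter (G.Adj v)).card + k := Nat.sub_le_iff_le_add.mp (hP v hv)
  omega

theorem card_sub_two_mul_le_card_inter_neighborFinset [Fintype V] (hP : IsKPlex G k P)
    (hu : u ∈ P) (hv : v ∈ P) :
    (P.card : ℤ) - 2 * k ≤ (G.neighborFinset u ∩ G.neighborFinset v).card := by
  have hcommon : P.filter (G.Adj u) ∩ P.filter (G.Adj v) ⊆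
      G.neighborFinset u ∩ G.neighborFinset v := fun w hw => by simp_all
  have hcount : (P.filter (G.Adj u)).card + (P.filter (G.Adj v)).card ≤
      P.card + (P.filter (G.Adj u) ∩ P.filter (G.Adj v)).card :=
    Finset.card_add_card_le_card_add_card_inter
      (P.filter_subset (G.Adj u)) (P.filter_subset (G.Adj v))
  have hle := Finset.card_le_card hcommon
  have hu' := hP.card_sub_le_card_filter_adj hu
  have hv' := hP.card_sub_le_card_filter_adj hv
  omega

end IsKPlex

theorem not_both_mem_kplex_of_adj_few_common_neighbors_general {V : Type*} [Fintype V]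
    (G : SimpleGraph V) (k : ℕ) (p : ℤ) (u v : V)
    (hcommon : ((G.neighborFinset u ∩ G.neighborFinset v).card : ℤ) < p - 2 * k) :
    ¬ ∃ P : Finset V, IsKPlex G k P ∧ p ≤ (P.card : ℤ) ∧ u ∈ P ∧ v ∈ P := by
  rintro ⟨P, hP, hp, hu, hv⟩
  have hbound := hP.card_sub_two_mul_le_card_inter_neighborFinset hu hv
  omega

/-- If `u` and `v` are distinct adjacent vertices with `|N_G(u) ∩ N_G(v)| < p - 2k`,
then no `k`-plex of size at least `p` contains both `u` and `v`. -/
theorem not_both_mem_kplex_of_adj_few_common_neighbors {V : Type*} [Fintype V]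
    (G : SimpleGraph V) (k : ℕ) (hk : 0 < k) (p : ℤ) (u v : V)
    (hne : u ≠ v) (hadj : G.Adj u v)
    (hcommon : ((G.neighborFinset u ∩ G.neighborFinset v).card : ℤ) < p - 2 * k) :
    ¬ ∃ P : Finset V, IsKPlex G k P ∧ p ≤ (P.card : ℤ) ∧ u ∈ P ∧ v ∈ P :=
  not_both_mem_kplex_of_adj_few_common_neighbors_general G k p u v hcommon
end

section
/- Let G be a simple graph, k a positive integer, p an integer, and u, v two distinct non-adjacent vertices of G with |N_G(u) ∩ N_G(v)| < p - 2k + 2. Then there is no k-plex of G of size at least p containing both u and v. -/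
/-!
Let `A` and `B` be the neighbourhoods of `u` and `v` inside a `k`-plex `P`. Each has at least
`|P| - k` elements, and since `u` and `v` are non-adjacent, `A ∪ B` misses both of them, so
`|A ∪ B| ≤ |P| - 2`. Inclusion–exclusion then gives `|A ∩ B| ≥ |P| + 2 - 2k`, and `A ∩ B`
consists of common neighbours of `u` and `v`.
-/

open scoped Classical

namespace SimpleGraph

variable {V : Type*} (G : SimpleGraph V)

lemma card_filter_adj_union_add_two_le {P : Finset V} {u v : V} (hu : u ∈ P) (hv : v ∈ P)
    (hne : u ≠ v) (hnadj : ¬ G.Adj u v) :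
    (P.filter (G.Adj u) ∪ P.filter (G.Adj v)).card + 2 ≤ P.card := by
  have hdisj : Disjoint (P.filter (G.Adj u) ∪ P.filter (G.Adj v)) {u, v} := by
    simp only [Finset.disjoint_insert_right, Finset.disjoint_singleton_right, Finset.mem_union,
      Finset.mem_filter, G.irrefl, hnadj, G.adj_comm v u, and_false, or_self, not_false_eq_true,
      and_self]
  have hsub : P.filter (G.Adj u) ∪ P.filter (G.Adj v) ∪ {u, v} ⊆ P := by
    simp only [Finset.union_subset_iff, Finset.filter_subset, Finset.insert_subset_iff,
      Finset.singleton_subset_iff, hu, hv, and_self]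
  calc _ = (P.filter (G.Adj u) ∪ P.filter (G.Adj v) ∪ {u, v}).card := by
        rw [Finset.card_union_of_disjoint hdisj, Finset.card_pair hne]
    _ ≤ P.card := Finset.card_le_card hsub

end SimpleGraph

namespace IsKPlex

variable {V : Type*} {G : SimpleGraph V} {k : ℕ} {P : Finset V}

lemma card_le_card_filter_adj_add (hP : IsKPlex G k P) {v : V} (hv : v ∈ P) :
    P.card ≤ (P.filter (G.Adj v)).card + k :=
  Nat.sub_le_iff_le_add.mp (hP v hv)

theorem card_add_two_le_of_not_adj (hP : IsKPlex G k P) {u v : V} (hu : u ∈ P) (hv : v ∈ P)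
    (hne : u ≠ v) (hnadj : ¬ G.Adj u v) :
    P.card + 2 ≤ (P.filter fun x => G.Adj u x ∧ G.Adj v x).card + 2 * k := by
  have hA := hP.card_le_card_filter_adj_add hu
  have hB := hP.card_le_card_filter_adj_add hv
  have hunion := G.card_filter_adj_union_add_two_le hu hv hne hnadj
  have hincl := Finset.card_union_add_card_inter (P.filter (G.Adj u)) (P.filter (G.Adj v))
  rw [← Finset.filter_and] at hincl
  omega

end IsKPlex

theorem not_both_mem_kplex_of_nonadj_few_common_neighbors_general {V : Type*} [Fintype V]
    (G : SimpleGraph V) (k : ℕ) (p : ℤ) (u v : V)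
    (hne : u ≠ v) (hnadj : ¬ G.Adj u v)
    (hcommon : ((G.neighborFinset u ∩ G.neighborFinset v).card : ℤ) < p - 2 * k + 2) :
    ¬ ∃ P : Finset V, IsKPlex G k P ∧ p ≤ (P.card : ℤ) ∧ u ∈ P ∧ v ∈ P := by
  rintro ⟨P, hP, hp, hu, hv⟩
  have hbound := hP.card_add_two_le_of_not_adj hu hv hne hnadj
  have hcommon_in_P : (P.filter fun x => G.Adj u x ∧ G.Adj v x).card ≤
      (G.neighborFinset u ∩ G.neighborFinset v).card :=
    Finset.card_le_card fun x hx => by simpa using (Finset.mem_filter.mp hx).2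
  omega

/-- If `u` and `v` are distinct non-adjacent vertices with
`|N_G(u) ∩ N_G(v)| < p - 2k + 2`, then no `k`-plex of size at least `p`
contains both `u` and `v`. -/
theorem not_both_mem_kplex_of_nonadj_few_common_neighbors {V : Type*} [Fintype V]
    (G : SimpleGraph V) (k : ℕ) (hk : 0 < k) (p : ℤ) (u v : V)
    (hne : u ≠ v) (hnadj : ¬ G.Adj u v)
    (hcommon : ((G.neighborFinset u ∩ G.neighborFinset v).card : ℤ) < p - 2 * k + 2) :
    ¬ ∃ P : Finset V, IsKPlex G k P ∧ p ≤ (P.card : ℤ) ∧ u ∈ P ∧ v ∈ P :=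
  not_both_mem_kplex_of_nonadj_few_common_neighbors_general G k p u v hne hnadj hcommon
end

section
/- Let G be a simple graph, k a positive integer, p an integer, and P a finite vertex set of G with n = |P| and λ the number of edges of the induced subgraph G[P]. If P is contained in some k-plex P* of G with |P*| ≥ p, then the number of vertices outside P that are adjacent to every vertex of P is at least p - n·k + n(n-1) - 2λ. -/
open scoped Classical

/-!
A vertex `v ∈ P` has at most `k` non-neighbours in the `k`-plex `P*`, and `n - d_P(v)` of them
already lie in `P`, so at most `k - n + d_P(v)` vertices of `P* \ P` miss `v`. Summing over `v`
with the handshake identity `∑ d_P(v) = 2λ`, at most `nk - n² + 2λ` vertices of `P* \ P` miss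
some vertex of `P`; the remaining `|P*| - n - (nk - n² + 2λ)` ones are common neighbours of `P`.
-/

open Finset

namespace SimpleGraph

variable {V : Type*} (G : SimpleGraph V)

theorem sum_card_filter_adj_eq_two_mul_card_edges [Fintype V] (P : Finset V) :
    ∑ v ∈ P, #(P.filter (G.Adj v)) = 2 * #(G.edgeFinset.filter (fun e => ∀ x ∈ e, x ∈ P)) := by
  have hdeg (v : (P : Set V)) : (G.induce P).degree v = #(P.filter (G.Adj v)) := by
    rw [← card_neighborFinset_eq_degree, ← card_map (.subtype (· ∈ (P : Set V)))]
    congr 1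
    ext u
    simp [and_comm]
  have hedges : #(G.induce P).edgeFinset = #(G.edgeFinset.filter (fun e => ∀ x ∈ e, x ∈ P)) := by
    rw [← card_map (Function.Embedding.subtype (· ∈ (P : Set V))).sym2Map]
    convert congrArg card (G.map_edgeFinset_induce (s := P)) using 3
    · congr!
    · ext e
      simp [mem_sym2_iff]
  rw [← hedges, ← sum_degrees_eq_twice_card_edges]
  simp_rw [hdeg]
  exact (sum_coe_sort P _).symm

theorem card_sdiff_le_card_common_add_sum_card_nonadj [Fintype V] (P Q : Finset V) :
    #(Q \ P) ≤ #(univ.filter (fun w => w ∉ P ∧ ∀ u ∈ P, G.Adj u w)) +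
      ∑ v ∈ P, #((Q \ P).filter (¬ G.Adj v ·)) := by
  refine (card_le_card fun w hw => ?_).trans
    ((card_union_le _ _).trans (Nat.add_le_add_left card_biUnion_le _))
  obtain ⟨-, hwP⟩ := mem_sdiff.mp hw
  by_cases hcommon : ∀ u ∈ P, G.Adj u w
  · exact mem_union_left _ (mem_filter.mpr ⟨mem_univ w, hwP, hcommon⟩)
  · push Not at hcommon
    obtain ⟨v, hv, hvw⟩ := hcommon
    exact mem_union_right _ (mem_biUnion.mpr ⟨v, hv, mem_filter.mpr ⟨hw, hvw⟩⟩)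

end SimpleGraph

namespace IsKPlex

variable {V : Type*} {G : SimpleGraph V} {k : ℕ} {Q : Finset V}

theorem card_filter_not_adj_le_s10 (hQ : IsKPlex G k Q) {v : V} (hv : v ∈ Q) :
    #(Q.filter (¬ G.Adj v ·)) ≤ k := by
  have := hQ v hv
  have := Q.card_filter_add_card_filter_not (fun u => G.Adj v u)
  omega

theorem card_sdiff_filter_not_adj_add_card_le (hQ : IsKPlex G k Q) {P : Finset V} (hPQ : P ⊆ Q)
    {v : V} (hv : v ∈ P) :
    #((Q \ P).filter (¬ G.Adj v ·)) + #P ≤ k + #(P.filter (G.Adj v)) := by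
  have hsplit : #((Q \ P).filter (¬ G.Adj v ·)) + #(P.filter (¬ G.Adj v ·)) =
      #(Q.filter (¬ G.Adj v ·)) := by
    rw [← card_union_of_disjoint (disjoint_filter_filter sdiff_disjoint), ← filter_union,
      sdiff_union_of_subset hPQ]
  have := P.card_filter_add_card_filter_not (G.Adj v)
  have := hQ.card_filter_not_adj_le_s10 (hPQ hv)
  omega

end IsKPlex

theorem common_neighborhood_lower_bound_general {V : Type*} [Fintype V]
    (G : SimpleGraph V) (k : ℕ) (p : ℤ)
    (P : Finset V) (n lam : ℕ)
    (hn : n = P.card)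
    (hlam : lam = (G.edgeFinset.filter (fun e => ∀ x ∈ e, x ∈ P)).card)
    (Pstar : Finset V) (hstar : IsKPlex G k Pstar) (hsub : P ⊆ Pstar)
    (hp : p ≤ (Pstar.card : ℤ)) :
    p - (n : ℤ) * (k : ℤ) + (n : ℤ) * ((n : ℤ) - 1) - 2 * (lam : ℤ) ≤
      ((Finset.univ.filter (fun w => w ∉ P ∧ ∀ u ∈ P, G.Adj u w)).card : ℤ) := by
  have hmissing : ∑ v ∈ P, #((Pstar \ P).filter (¬ G.Adj v ·)) + n * n ≤ n * k + 2 * lam := by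
    calc ∑ v ∈ P, #((Pstar \ P).filter (¬ G.Adj v ·)) + n * n
        = ∑ v ∈ P, (#((Pstar \ P).filter (¬ G.Adj v ·)) + #P) := by
          rw [sum_add_distrib, sum_const, smul_eq_mul, hn]
      _ ≤ ∑ v ∈ P, (k + #(P.filter (G.Adj v))) :=
          sum_le_sum fun v hv => hstar.card_sdiff_filter_not_adj_add_card_le hsub hv
      _ = n * k + 2 * lam := by
          rw [sum_add_distrib, sum_const, smul_eq_mul, G.sum_card_filter_adj_eq_two_mul_card_edges,
            hn, hlam]
  have hcover := G.card_sdiff_le_card_common_add_sum_card_nonadj P Pstar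
  have hsdiff : #(Pstar \ P) + n = #Pstar := by rw [hn, card_sdiff_add_card_eq_card hsub]
  zify at hmissing hcover hsdiff
  linarith

/-- Higher-order reduction: if a vertex set `P` with `n = |P|` and `λ = |E(G[P])|`
is contained in a `k`-plex of size at least `p`, then the number of vertices outside
`P` adjacent to every vertex of `P` is at least `p - n·k + n(n-1) - 2λ`. -/
theorem common_neighborhood_lower_bound {V : Type*} [Fintype V]
    (G : SimpleGraph V) (k : ℕ) (hk : 0 < k) (p : ℤ)
    (P : Finset V) (n lam : ℕ)
    (hn : n = P.card)
    (hlam : lam = (G.edgeFinset.filter (fun e => ∀ x ∈ e, x ∈ P)).card)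
    (Pstar : Finset V) (hstar : IsKPlex G k Pstar) (hsub : P ⊆ Pstar)
    (hp : p ≤ (Pstar.card : ℤ)) :
    p - (n : ℤ) * (k : ℤ) + (n : ℤ) * ((n : ℤ) - 1) - 2 * (lam : ℤ) ≤
      ((Finset.univ.filter (fun w => w ∉ P ∧ ∀ u ∈ P, G.Adj u w)).card : ℤ) :=
  common_neighborhood_lower_bound_general G k p P n lam hn hlam Pstar hstar hsub hp
end

section
/- Let G be a simple graph on a finite vertex set V, d a nonnegative integer, and u a vertex such that every vertex w ∈ {u} ∪ N_G(u) satisfies |N_G(w)| ≤ d. Then for every D ⊆ V such that G \ D is d-degree-bounded, the set D \ {u} also has the property that G \ (D \ {u}) is d-degree-bounded. In particular, if there is a d-bdd set of size at most t, then there is one of size at most t that excludes u. -/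
open scoped Classical

/-- `G \ D` (the induced subgraph on `V \ D`) is `d`-degree-bounded: every vertex
outside `D` has at most `d` neighbors outside `D`. -/
def DegBoundedAfterDeletion {V : Type*} [Fintype V] (G : SimpleGraph V) (d : ℕ)
    (D : Finset V) : Prop :=
  ∀ x ∉ D, ((Finset.univ \ D).filter (fun w => G.Adj x w)).card ≤ d

section

variable {V : Type*} [Fintype V] {G : SimpleGraph V} {d : ℕ}

theorem SimpleGraph.card_filter_adj_le_degree (s : Finset V) (x : V) :
    (s.filter (G.Adj x)).card ≤ G.degree x := by
  rw [← G.card_neighborFinset_eq_degree]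
  exact Finset.card_le_card fun w hw => by simpa using (Finset.mem_filter.1 hw).2

/-- Vertices of `{u} ∪ N(u)` stay bounded by their full degree; every other vertex
has the same neighbours outside `D.erase u` as outside `D`. -/
theorem DegBoundedAfterDeletion.erase [DecidableEq V] {D : Finset V} {u : V}
    (hD : DegBoundedAfterDeletion G d D)
    (hu : ∀ w ∈ insert u (G.neighborFinset u), G.degree w ≤ d) :
    DegBoundedAfterDeletion G d (D.erase u) := by
  intro x hx
  by_cases hxu : x = u ∨ G.Adj u x
  · exact (G.card_filter_adj_le_degree _ x).trans (hu x (by simpa using hxu))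
  · push Not at hxu
    obtain ⟨hxu, hux⟩ := hxu
    have hxD : x ∉ D := fun h => hx (Finset.mem_erase.2 ⟨hxu, h⟩)
    have hxu' : ¬G.Adj x u := fun h => hux h.symm
    refine Eq.trans_le ?_ (hD x hxD)
    congr 1
    ext w
    rcases eq_or_ne w u with rfl | hwu <;> simp [*]

end

/-- If every vertex in `{u} ∪ N_G(u)` has degree at most `d` in `G`, then removing `u`
from any `d`-bdd set keeps it a `d`-bdd set; in particular, any `d`-bdd set of size at
most `t` can be replaced by one of size at most `t` excluding `u`. -/
theorem bdd_erase_low_degree_vertex {V : Type*} [Fintype V] [DecidableEq V]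
    (G : SimpleGraph V) (d : ℕ) (u : V)
    (hu : ∀ w ∈ insert u (G.neighborFinset u), G.degree w ≤ d) :
    (∀ D : Finset V, DegBoundedAfterDeletion G d D →
      DegBoundedAfterDeletion G d (D.erase u)) ∧
    (∀ t : ℕ, (∃ D : Finset V, D.card ≤ t ∧ DegBoundedAfterDeletion G d D) →
      ∃ D : Finset V, D.card ≤ t ∧ u ∉ D ∧ DegBoundedAfterDeletion G d D) := by
  refine ⟨fun D hD => hD.erase hu, ?_⟩
  rintro t ⟨D, hcard, hD⟩
  exact ⟨D.erase u, D.card_erase_le.trans hcard, D.notMem_erase u, hD.erase hu⟩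
end

section
/- Let G be a simple graph on a finite vertex set V, d a nonnegative integer, and C ⊆ V. Write S = V \ C = {v_1, ..., v_q} and δ_i = |S ∩ N_G(v_i)| for 1 ≤ i ≤ q, and assume δ_i ≤ d for all i. Let π_0, π_1, ..., π_q be a partition of C into pairwise disjoint sets with ⋃_{i=0}^{q} π_i = C, π_0 = C \ ⋃_{i=1}^{q} N_G(v_i), and π_i ⊆ C ∩ N_G(v_i) for 1 ≤ i ≤ q. Then every set D ⊆ C such that G \ D is d-degree-bounded satisfies |D| ≥ |C| - |π_0| - Σ_{i=1}^{q} min(d - δ_i, |π_i|). -/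
open scoped Classical

/-!
Every vertex of `C \ D` lies in `π₀` or in some `π v`. For `v ∉ C` the undeleted part of `π v`
and the `δ v` neighbours of `v` outside `C` are disjoint sets of neighbours of `v` in `G \ D`,
so at most `d - δ v` vertices of `π v` survive the deletion.
-/

section

open Finset

theorem card_sdiff_le_card_add_sum_card_sdiff {α ι : Type*} [DecidableEq α]
    {s t : Finset α} {I : Finset ι} {P : ι → Finset α} (hcover : s ⊆ t ∪ I.biUnion P) (D : Finset α) :
    (s \ D).card ≤ t.card + ∑ i ∈ I, (P i \ D).card := by
  have hsub : s \ D ⊆ t ∪ I.biUnion fun i => P i \ D := by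
    intro x hx
    obtain ⟨hxs, hxD⟩ := mem_sdiff.mp hx
    have hxcover := hcover hxs
    simp only [mem_union, mem_biUnion, mem_sdiff] at hxcover ⊢
    rcases hxcover with h | ⟨i, hi, hxi⟩
    · exact Or.inl h
    · exact Or.inr ⟨i, hi, hxi, hxD⟩
  calc (s \ D).card ≤ (t ∪ I.biUnion fun i => P i \ D).card := card_le_card hsub
    _ ≤ t.card + (I.biUnion fun i => P i \ D).card := card_union_le _ _
    _ ≤ t.card + ∑ i ∈ I, (P i \ D).card := Nat.add_le_add_left card_biUnion_le _

variable {V : Type*} [Fintype V] [DecidableEq V] {G : SimpleGraph V} {d : ℕ} {C D : Finset V}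

theorem DegBoundedAfterDeletion.card_neighborFinset_sdiff_le
    (hbd : DegBoundedAfterDeletion G d D) {v : V} (hv : v ∉ D) :
    (G.neighborFinset v \ D).card ≤ d := by
  convert hbd v hv using 2
  ext w
  simp [and_comm]

theorem card_sdiff_add_card_compl_inter_neighborFinset_le
    (hbd : DegBoundedAfterDeletion G d D) (hD : D ⊆ C) {v : V} (hv : v ∈ univ \ C)
    {P : Finset V} (hP : P ⊆ C ∩ G.neighborFinset v) :
    (P \ D).card + ((univ \ C) ∩ G.neighborFinset v).card ≤ d := by
  have hvD : v ∉ D := fun h => (mem_sdiff.mp hv).2 (hD h)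
  have hdisj : Disjoint (P \ D) ((univ \ C) ∩ G.neighborFinset v) :=
    disjoint_left.mpr fun x hx hx' =>
      (mem_sdiff.mp (mem_inter.mp hx').1).2 (mem_inter.mp (hP (mem_sdiff.mp hx).1)).1
  have hsub : (P \ D) ∪ ((univ \ C) ∩ G.neighborFinset v) ⊆ G.neighborFinset v \ D := by
    intro x hx
    simp only [mem_union, mem_sdiff, mem_inter, mem_univ, true_and] at hx ⊢
    rcases hx with ⟨hxP, hxD⟩ | ⟨hxC, hxv⟩
    · exact ⟨(mem_inter.mp (hP hxP)).2, hxD⟩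
    · exact ⟨hxv, fun h => hxC (hD h)⟩
  rw [← card_union_of_disjoint hdisj]
  exact (card_le_card hsub).trans (hbd.card_neighborFinset_sdiff_le hvD)

end

theorem partition_bound_for_bdd_general {V : Type*} [Fintype V] [DecidableEq V]
    (G : SimpleGraph V) (d : ℕ) (C : Finset V)
    (π₀ : Finset V) (π : V → Finset V)
    (hunion : π₀ ∪ (Finset.univ \ C).biUnion π = C)
    (hπsub : ∀ v ∈ Finset.univ \ C, π v ⊆ C ∩ G.neighborFinset v) :
    ∀ D : Finset V, D ⊆ C → DegBoundedAfterDeletion G d D →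
      (C.card : ℤ) - (π₀.card : ℤ) -
        (∑ v ∈ Finset.univ \ C,
          min ((d : ℤ) - (((Finset.univ \ C) ∩ G.neighborFinset v).card : ℤ))
            (((π v).card : ℤ))) ≤ (D.card : ℤ) := by
  intro D hD hbd
  have hcover := card_sdiff_le_card_add_sum_card_sdiff hunion.ge D
  have hpiece : ∀ v ∈ Finset.univ \ C, ((π v \ D).card : ℤ) ≤
      min ((d : ℤ) - (((Finset.univ \ C) ∩ G.neighborFinset v).card : ℤ)) ((π v).card : ℤ) := by
    intro v hv
    have hdeg := card_sdiff_add_card_compl_inter_neighborFinset_le hbd hD hv (hπsub v hv)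
    have hle : (π v \ D).card ≤ (π v).card := Finset.card_le_card Finset.sdiff_subset
    exact le_min (by omega) (by exact_mod_cast hle)
  have hCD : ((C \ D).card : ℤ) = C.card - D.card := by
    rw [Finset.card_sdiff_of_subset hD, Nat.cast_sub (Finset.card_le_card hD)]
  have hsum := Finset.sum_le_sum hpiece
  have hcover' : ((C \ D).card : ℤ) ≤ π₀.card + ∑ v ∈ Finset.univ \ C, ((π v \ D).card : ℤ) := by
    exact_mod_cast hcover
  linarith

/-- Partition bound for the minimum `d`-bdd problem. With `S = V \ C`,
`δ v = |S ∩ N_G(v)|` for `v ∈ S` (assumed `≤ d`), and a partition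
`π₀, (π v)_{v ∈ S}` of `C` with `π₀ = C \ ⋃_{v ∈ S} N_G(v)` and
`π v ⊆ C ∩ N_G(v)`, every `D ⊆ C` such that `G \ D` is `d`-degree-bounded
satisfies `|D| ≥ |C| - |π₀| - Σ_{v ∈ S} min(d - δ v, |π v|)`. -/
theorem partition_bound_for_bdd {V : Type*} [Fintype V] [DecidableEq V]
    (G : SimpleGraph V) (d : ℕ) (C : Finset V)
    (π₀ : Finset V) (π : V → Finset V)
    (hδ : ∀ v ∈ Finset.univ \ C, ((Finset.univ \ C) ∩ G.neighborFinset v).card ≤ d)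
    (hunion : π₀ ∪ (Finset.univ \ C).biUnion π = C)
    (hπ₀ : π₀ = C \ (Finset.univ \ C).biUnion (fun v => G.neighborFinset v))
    (hπsub : ∀ v ∈ Finset.univ \ C, π v ⊆ C ∩ G.neighborFinset v)
    (hdisj₀ : ∀ v ∈ Finset.univ \ C, Disjoint π₀ (π v))
    (hdisj : ∀ v ∈ Finset.univ \ C, ∀ w ∈ Finset.univ \ C, v ≠ w → Disjoint (π v) (π w)) :
    ∀ D : Finset V, D ⊆ C → DegBoundedAfterDeletion G d D →
      (C.card : ℤ) - (π₀.card : ℤ) -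
        (∑ v ∈ Finset.univ \ C,
          min ((d : ℤ) - (((Finset.univ \ C) ∩ G.neighborFinset v).card : ℤ))
            (((π v).card : ℤ))) ≤ (D.card : ℤ) :=
  partition_bound_for_bdd_general G d C π₀ π hunion hπsub
end
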